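/- Suppose V ≠ 0, H_{α²}(1) ≠ 0, and H_{α²}(−1) ≠ 0, and let A_up = −H_α(1)/(2·H_{α²}(1)) and A_down = −H_α(−1)/(2·H_{α²}(−1)). Then A_up = A_down if and only if λ_V·λ_γ·(C_{D,α}·C_{L,α²} − C_{L,α}·C_{D,α²}) = 0. In particular, if λ_V ≠ 0 and C_{D,α}·C_{L,α²} − C_{L,α}·C_{D,α²} ≠ 0, then A_up = A_down if and only if λ_γ = 0, i.e., the intersection of the two optimal angle-of-attack curves corresponds exactly to the bank-angle switching condition H_σ = λ_γ = 0. -/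
import Mathlib


/-- With `V ≠ 0`, `Hα²(1) ≠ 0`, `Hα²(−1) ≠ 0`, and
`A_up = −Hα(1)/(2·Hα²(1))`, `A_down = −Hα(−1)/(2·Hα²(−1))`, one has
`A_up = A_down` iff `lamV·lamG·(C_{D,α}·C_{L,α²} − C_{L,α}·C_{D,α²}) = 0`.
In particular, if `lamV ≠ 0` and `C_{D,α}·C_{L,α²} − C_{L,α}·C_{D,α²} ≠ 0`,
then `A_up = A_down` iff `lamG = 0`, i.e. the intersection of the two optimal
angle-of-attack curves corresponds exactly to the bank-angle switching
condition `H_σ = lamG = 0`. -/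
theorem stmt_6
    (lamV lamG V CDα CLα CDα2 CLα2 : ℝ) (hV : V ≠ 0)
    (Hα HαSq : ℝ → ℝ)
    (hHα : ∀ u₁, Hα u₁ = -lamV * CDα + u₁ * lamG * CLα / V)
    (hHαSq : ∀ u₁, HαSq u₁ = -lamV * CDα2 + u₁ * lamG * CLα2 / V)
    (hup : HαSq 1 ≠ 0) (hdown : HαSq (-1) ≠ 0)
    (Aup Adown Hσ : ℝ)
    (hAup : Aup = -Hα 1 / (2 * HαSq 1))
    (hAdown : Adown = -Hα (-1) / (2 * HαSq (-1)))
    (hHσ : Hσ = lamG) :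
    (Aup = Adown ↔ lamV * lamG * (CDα * CLα2 - CLα * CDα2) = 0) ∧
    (lamV ≠ 0 → CDα * CLα2 - CLα * CDα2 ≠ 0 →
      (Aup = Adown ↔ Hσ = 0)) := by
  have key : Aup = Adown ↔ lamV * lamG * (CDα * CLα2 - CLα * CDα2) = 0 := by
    rw [hAup, hAdown, div_eq_div_iff (by simpa using mul_ne_zero two_ne_zero hup)
      (by simpa using mul_ne_zero two_ne_zero hdown)]
    rw [hHα 1, hHα (-1), hHαSq 1, hHαSq (-1), ← sub_eq_zero]
    have hE : -(-lamV * CDα + 1 * lamG * CLα / V) * (2 * (-lamV * CDα2 + -1 * lamG * CLα2 / V)) -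
        -(-lamV * CDα + -1 * lamG * CLα / V) * (2 * (-lamV * CDα2 + 1 * lamG * CLα2 / V)) =
        -(4 / V) * (lamV * lamG * (CDα * CLα2 - CLα * CDα2)) := by
      field_simp
      ring
    rw [hE, neg_mul, neg_eq_zero, mul_eq_zero]
    have h4 : (4 : ℝ) / V ≠ 0 := div_ne_zero (by norm_num) hV
    simp [h4]
  refine ⟨key, fun hlV hC => ?_⟩
  rw [key, hHσ]
  constructor
  · intro h
    rcases mul_eq_zero.mp h with h1 | h1
    · rcases mul_eq_zero.mp h1 with h2 | h2
      · exact absurd h2 hlV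
      · exact h2
    · exact absurd h1 hC
  · intro h; rw [h]; ring
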